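/- arXiv:2405.12499 — 2 statements merged into one kernel-verified Lean document; each statement's English description precedes it below -/
import Mathlib

section
/- If an increasing sequence (u_j) of positive reals satisfies the lacunary condition (L) with constant A > 1, then for every m ∈ ℕ and every real t ≠ 0, Σ_{j=m+1}^∞ max_{u_{j-1} ≤ v ≤ u_j} |∫_{u_{j-1}}^{v} sin(t·u)/u du| ≤ 3A / (|t| · u_m). -/
open Set Filter MeasureTheory Real
open scoped Topology ENNReal

noncomputable section

/-- Sum of absolute second-order rectangular increments of `f` over the grid `x`, `y`. -/
def vitaliSum (f : ℝ → ℝ → ℝ) (x y : ℕ → ℝ) (n m : ℕ) : ℝ :=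
  ∑ i ∈ Finset.range n, ∑ j ∈ Finset.range m,
    |f (x (i+1)) (y (j+1)) - f (x i) (y (j+1)) - f (x (i+1)) (y j) + f (x i) (y j)|

/-- Vitali variation of `f` over a set `Q ⊆ ℝ²`: the supremum, over compact rectangles
contained in `Q` and partitions of them, of the sum of absolute rectangular increments. -/
def vitaliVar (f : ℝ → ℝ → ℝ) (Q : Set (ℝ × ℝ)) : ℝ≥0∞ :=
  ⨆ (n : ℕ) (m : ℕ) (x : ℕ → ℝ) (y : ℕ → ℝ)
    (_ : ∀ i < n, x i < x (i+1)) (_ : ∀ j < m, y j < y (j+1))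
    (_ : Set.Icc (x 0) (x n) ×ˢ Set.Icc (y 0) (y m) ⊆ Q),
    ENNReal.ofReal (vitaliSum f x y n m)

/-- Bounded variation in the sense of Vitali over `ℝ²`. -/
def BVV (f : ℝ → ℝ → ℝ) : Prop := vitaliVar f Set.univ < ⊤

/-- Bounded variation in the sense of Hardy over `ℝ²`. -/
def BVH (f : ℝ → ℝ → ℝ) : Prop :=
  BVV f ∧ (∀ y, BoundedVariationOn (fun s => f s y) Set.univ) ∧
    (∀ x, BoundedVariationOn (fun s => f x s) Set.univ)

/-- The space `BV_{||0||}(ℝ²)`: Vitali bounded variation and vanishing as `‖(x,y)‖ → ∞`. -/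
def BVzero (f : ℝ → ℝ → ℝ) : Prop :=
  BVV f ∧ Tendsto (fun p : ℝ × ℝ => f p.1 p.2) (cocompact (ℝ × ℝ)) (𝓝 0)

/-- `x`, `y` form a partition of `[a,b] × [c,d]` with `n`, resp. `m`, subintervals. -/
def IsPartition (x y : ℕ → ℝ) (n m : ℕ) (a b c d : ℝ) : Prop :=
  x 0 = a ∧ x n = b ∧ y 0 = c ∧ y m = d ∧
    (∀ i < n, x i < x (i+1)) ∧ (∀ j < m, y j < y (j+1))

/-- The tags `(ξ i j, η i j)` belong to the corresponding subrectangles. -/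
def Tags (x y : ℕ → ℝ) (ξ η : ℕ → ℕ → ℝ) (n m : ℕ) : Prop :=
  ∀ i < n, ∀ j < m,
    ξ i j ∈ Set.Icc (x i) (x (i+1)) ∧ η i j ∈ Set.Icc (y j) (y (j+1))

/-- Riemann–Stieltjes sum of `g` with respect to `f`. -/
def RSSum (g f : ℝ → ℝ → ℝ) (x y : ℕ → ℝ) (ξ η : ℕ → ℕ → ℝ) (n m : ℕ) : ℝ :=
  ∑ i ∈ Finset.range n, ∑ j ∈ Finset.range m,
    g (ξ i j) (η i j) *
      (f (x (i+1)) (y (j+1)) - f (x i) (y (j+1)) - f (x (i+1)) (y j) + f (x i) (y j))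

/-- `g` is Riemann–Stieltjes integrable with respect to `f` over `[a,b] × [c,d]`,
with integral `A` (mesh measured by the diagonals of the subrectangles). -/
def RSIntegralOn (g f : ℝ → ℝ → ℝ) (a b c d A : ℝ) : Prop :=
  ∀ ε > 0, ∃ δ > 0, ∀ (n m : ℕ) (x y : ℕ → ℝ) (ξ η : ℕ → ℕ → ℝ),
    IsPartition x y n m a b c d → Tags x y ξ η n m →
    (∀ i < n, ∀ j < m, Real.sqrt ((x (i+1) - x i)^2 + (y (j+1) - y j)^2) < δ) →
    |RSSum g f x y ξ η n m - A| < ε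

/-- Improper Riemann–Stieltjes integral of `g` with respect to `f` over `ℝ²`,
as a Pringsheim limit over expanding compact rectangles. -/
def ImproperRS (g f : ℝ → ℝ → ℝ) (A : ℝ) : Prop :=
  ∀ ε > 0, ∃ M : ℝ, ∀ a b c d : ℝ, a ≤ -M → M ≤ b → c ≤ -M → M ≤ d →
    ∃ B : ℝ, RSIntegralOn g f a b c d B ∧ |B - A| < ε

/-- Improper Riemann–Stieltjes integral of a complex-valued `G` with respect to `f`,
defined via real and imaginary parts. -/
def ImproperRSC (G : ℝ → ℝ → ℂ) (f : ℝ → ℝ → ℝ) (A : ℂ) : Prop :=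
  ImproperRS (fun s t => (G s t).re) f A.re ∧ ImproperRS (fun s t => (G s t).im) f A.im

/-- Riemann sum of `f` over a tagged partition. -/
def KHSum (f : ℝ → ℝ → ℝ) (x y : ℕ → ℝ) (ξ η : ℕ → ℕ → ℝ) (n m : ℕ) : ℝ :=
  ∑ i ∈ Finset.range n, ∑ j ∈ Finset.range m,
    f (ξ i j) (η i j) * (x (i+1) - x i) * (y (j+1) - y j)

/-- The tagged partition is `δ`-fine for the gauge `δ`. -/
def KHFine (δ : ℝ × ℝ → ℝ) (x y : ℕ → ℝ) (ξ η : ℕ → ℕ → ℝ) (n m : ℕ) : Prop :=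
  ∀ i < n, ∀ j < m,
    Set.Icc (x i) (x (i+1)) ⊆
      Set.Ioo (ξ i j - δ (ξ i j, η i j)) (ξ i j + δ (ξ i j, η i j)) ∧
    Set.Icc (y j) (y (j+1)) ⊆
      Set.Ioo (η i j - δ (ξ i j, η i j)) (η i j + δ (ξ i j, η i j))

/-- `f` is Kurzweil–Henstock integrable over `[a,b] × [c,d]` with integral `A`. -/
def KHIntegralOn (f : ℝ → ℝ → ℝ) (a b c d A : ℝ) : Prop :=
  ∀ ε > 0, ∃ δ : ℝ × ℝ → ℝ, (∀ p, 0 < δ p) ∧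
    ∀ (n m : ℕ) (x y : ℕ → ℝ) (ξ η : ℕ → ℕ → ℝ),
      IsPartition x y n m a b c d → Tags x y ξ η n m → KHFine δ x y ξ η n m →
      |KHSum f x y ξ η n m - A| < ε

/-- Kurzweil–Henstock integrability of a complex-valued function, via components. -/
def KHIntegralOnC (f : ℝ → ℝ → ℂ) (a b c d : ℝ) (A : ℂ) : Prop :=
  KHIntegralOn (fun s t => (f s t).re) a b c d A.re ∧
  KHIntegralOn (fun s t => (f s t).im) a b c d A.im

/-- Pringsheim limit, over expanding compact rectangles, of Kurzweil–Henstock integrals. -/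
def HasKHPringsheim (f : ℝ → ℝ → ℝ) (A : ℝ) : Prop :=
  ∀ ε > 0, ∃ M : ℝ, ∀ a b c d : ℝ, a ≤ -M → M ≤ b → c ≤ -M → M ≤ d →
    ∃ B : ℝ, KHIntegralOn f a b c d B ∧ |B - A| < ε

/-- Complex-valued Pringsheim limit of Kurzweil–Henstock integrals. -/
def HasKHPringsheimC (f : ℝ → ℝ → ℂ) (A : ℂ) : Prop :=
  ∀ ε > 0, ∃ M : ℝ, ∀ a b c d : ℝ, a ≤ -M → M ≤ b → c ≤ -M → M ≤ d →
    ∃ B : ℂ, KHIntegralOnC f a b c d B ∧ ‖B - A‖ < ε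

/-- The kernel `e^{-i(ξ t₁ + η t₂)}`. -/
def fourierKernel (ξ η t₁ t₂ : ℝ) : ℂ :=
  Complex.exp (-Complex.I * ((ξ * t₁ + η * t₂ : ℝ) : ℂ))

/-- `A` is the KP-Fourier transform of `f` at `(ξ, η)`. -/
def HasKPFourier (f : ℝ → ℝ → ℝ) (ξ η : ℝ) (A : ℂ) : Prop :=
  HasKHPringsheimC (fun t₁ t₂ => (f t₁ t₂ : ℂ) * fourierKernel ξ η t₁ t₂) A

/-- The region `{(ξ,η) : α₁ ≤ |ξ| ≤ β₁, α₂ ≤ |η| ≤ β₂}`. -/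
def annulusRect (α₁ β₁ α₂ β₂ : ℝ) : Set (ℝ × ℝ) :=
  {p | α₁ ≤ |p.1| ∧ |p.1| ≤ β₁ ∧ α₂ ≤ |p.2| ∧ |p.2| ≤ β₂}

/-- The kernel `(sin(βt) - sin(αt))/t`, extended by continuity at `t = 0`. -/
def sinKernel (α β t : ℝ) : ℝ :=
  if t = 0 then β - α else (Real.sin (β * t) - Real.sin (α * t)) / t

/-- The kernel `h_{α,β}(t) = (sin(βt) - sin(αt))/(πt)`, extended by continuity at `t = 0`. -/
def sinKernelPi (α β t : ℝ) : ℝ :=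
  if t = 0 then (β - α) / π else (Real.sin (β * t) - Real.sin (α * t)) / (π * t)

/-- `g_{(x,y)}(t₁,t₂) = f(x−t₁,y−t₂) + f(x−t₁,y+t₂) + f(x+t₁,y−t₂) + f(x+t₁,y+t₂)`. -/
def quadSum (f : ℝ → ℝ → ℝ) (x y t₁ t₂ : ℝ) : ℝ :=
  f (x - t₁) (y - t₂) + f (x - t₁) (y + t₂) + f (x + t₁) (y - t₂) + f (x + t₁) (y + t₂)

/-!
Integrating by parts against the primitive `-cos (t s) / t`, which is bounded by `1 / |t|`,
each integral `∫_a^v sin (t s) / s ds` with `0 < a ≤ v` is at most `2 / (|t| a)`. Summing over the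
blocks `[u_j, u_{j+1}]`, `j ≥ m`, the lacunary condition bounds `Σ_{j ≥ m} 1 / u_j` by `A / u_m`,
so the whole sum is at most `2A / (|t| u_m) ≤ 3A / (|t| u_m)`.
-/

theorem abs_integral_mul_le_of_deriv_nonpos {f F g g' : ℝ → ℝ} {a b C : ℝ} (hab : a ≤ b)
    (hF : ∀ x ∈ Icc a b, HasDerivAt F (f x) x) (hg : ∀ x ∈ Icc a b, HasDerivAt g (g' x) x)
    (hg' : ∀ x ∈ Icc a b, g' x ≤ 0) (hgb : 0 ≤ g b) (hFC : ∀ x ∈ Icc a b, |F x| ≤ C)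
    (hf : IntervalIntegrable f volume a b) (hg'_int : IntervalIntegrable g' volume a b) :
    |∫ x in a..b, g x * f x| ≤ 2 * C * g a := by
  rw [← uIcc_of_le hab] at hF hg
  have hC : 0 ≤ C := (abs_nonneg _).trans (hFC a (left_mem_Icc.mpr hab))
  have hga : g b ≤ g a := by
    have h := intervalIntegral.integral_nonneg (μ := volume) hab
      fun x hx => neg_nonneg.mpr (hg' x hx)
    rw [intervalIntegral.integral_neg,
      intervalIntegral.integral_eq_sub_of_hasDerivAt hg hg'_int] at h
    linarith
  have hrem : |∫ x in a..b, g' x * F x| ≤ C * (g a - g b) := by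
    calc |∫ x in a..b, g' x * F x| ≤ ∫ x in a..b, -C * g' x := by
          rw [← Real.norm_eq_abs]
          refine intervalIntegral.norm_integral_le_of_norm_le hab (ae_of_all _ fun x hx => ?_)
            (hg'_int.const_mul _)
          have hx : x ∈ Icc a b := Ioc_subset_Icc_self hx
          rw [Real.norm_eq_abs, abs_mul, abs_of_nonpos (hg' x hx)]
          nlinarith [hFC x hx, abs_nonneg (F x), hg' x hx]
      _ = C * (g a - g b) := by
          rw [intervalIntegral.integral_const_mul,
            intervalIntegral.integral_eq_sub_of_hasDerivAt hg hg'_int]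
          ring
  rw [intervalIntegral.integral_mul_deriv_eq_deriv_mul hg hF hg'_int hf]
  have hFb := hFC b (right_mem_Icc.mpr hab)
  have hFa := hFC a (left_mem_Icc.mpr hab)
  calc |g b * F b - g a * F a - ∫ x in a..b, g' x * F x|
      ≤ |g b| * |F b| + |g a| * |F a| + |∫ x in a..b, g' x * F x| := by
        rw [← abs_mul, ← abs_mul]
        exact (abs_sub _ _).trans (add_le_add_left (abs_sub _ _) _)
    _ ≤ g b * C + g a * C + C * (g a - g b) := by
        have hga₀ : 0 ≤ g a := hgb.trans hga
        rw [abs_of_nonneg hgb, abs_of_nonneg hga₀]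
        gcongr
    _ = 2 * C * g a := by ring

theorem hasDerivAt_neg_cos_mul_div {t : ℝ} (ht : t ≠ 0) (x : ℝ) :
    HasDerivAt (fun s => -cos (t * s) / t) (sin (t * x)) x :=
  ((((hasDerivAt_id x).const_mul t).cos.neg).div_const t).congr_deriv (by field_simp; rfl)

theorem abs_integral_sin_mul_div_le {t a b : ℝ} (ht : t ≠ 0) (ha : 0 < a) (hab : a ≤ b) :
    |∫ s in a..b, sin (t * s) / s| ≤ 2 / (|t| * a) := by
  have hpos : ∀ x ∈ Icc a b, 0 < x := fun x hx => ha.trans_le hx.1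
  have hbound := abs_integral_mul_le_of_deriv_nonpos (f := fun s => sin (t * s))
    (g := fun s => s⁻¹) (g' := fun s => -(s ^ 2)⁻¹) (C := 1 / |t|) hab
    (fun x _ => hasDerivAt_neg_cos_mul_div ht x)
    (fun x hx => hasDerivAt_inv (hpos x hx).ne')
    (fun x _ => neg_nonpos.mpr (by positivity))
    (inv_nonneg.mpr (ha.le.trans hab))
    (fun x _ => by rw [abs_div, abs_neg]; gcongr; exact abs_cos_le_one _)
    ((by fun_prop : Continuous fun s => sin (t * s)).intervalIntegrable a b)
    ((ContinuousOn.inv₀ (by fun_prop) fun x hx => pow_ne_zero 2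
      (hpos x (uIcc_of_le hab ▸ hx)).ne').neg.intervalIntegrable)
  simp only [inv_mul_eq_div] at hbound
  calc _ ≤ 2 * (1 / |t|) * a⁻¹ := hbound
    _ = 2 / (|t| * a) := by ring

theorem sSup_abs_integral_sin_mul_div_le {t a b : ℝ} (ht : t ≠ 0) (ha : 0 < a) :
    sSup ((fun v => |∫ s in a..v, sin (t * s) / s|) '' Icc a b) ≤ 2 / (|t| * a) := by
  have : 0 < |t| := abs_pos.mpr ht
  refine Real.sSup_le ?_ (by positivity)
  rintro _ ⟨v, hv, rfl⟩
  exact abs_integral_sin_mul_div_le ht ha hv.1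

theorem sum_range_one_div_le_of_lacunary {u : ℕ → ℝ} {A : ℝ} {m : ℕ} (hm : 1 ≤ m)
    (hpos : ∀ j, 1 ≤ j → 0 < u j) (hsum : Summable fun j => 1 / u (j + 1))
    (hL : u m * ∑' j, 1 / u (m + j) ≤ A) (n : ℕ) :
    ∑ j ∈ Finset.range n, 1 / u (m + j) ≤ A / u m := by
  have htail : Summable fun j => 1 / u (m + j) :=
    ((summable_nat_add_iff (m - 1)).mpr hsum).congr fun j => by congr 2; omega
  rw [le_div_iff₀ (hpos m hm), mul_comm]
  refine le_trans ?_ hL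
  gcongr
  · exact (hpos m hm).le
  · exact htail.sum_le_tsum _ fun j _ => one_div_nonneg.mpr (hpos _ (by omega)).le

theorem stmt1_general (u : ℕ → ℝ)
    (hpos : ∀ j, 1 ≤ j → 0 < u j) (A : ℝ) (hA : 1 < A)
    (hsum : Summable fun j : ℕ => 1 / u (j + 1))
    (hL : ∀ m : ℕ, 1 ≤ m → u m * ∑' j : ℕ, 1 / u (m + j) ≤ A)
    (t : ℝ) (ht : t ≠ 0) (m : ℕ) (hm : 1 ≤ m) :
    ∀ n : ℕ, ∑ j ∈ Finset.range n,
      sSup ((fun v : ℝ => |∫ s in (u (m + j))..v, Real.sin (t * s) / s|) ''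
        Set.Icc (u (m + j)) (u (m + j + 1))) ≤ 3 * A / (|t| * u m) := by
  intro n
  have hum : 0 < u m := hpos m hm
  have ht' : 0 < |t| := abs_pos.mpr ht
  calc _ ≤ ∑ j ∈ Finset.range n, 2 / |t| * (1 / u (m + j)) := by
        refine Finset.sum_le_sum fun j _ => ?_
        rw [div_mul_div_comm, mul_one]
        exact sSup_abs_integral_sin_mul_div_le ht (hpos _ (by omega))
    _ ≤ 2 / |t| * (A / u m) := by
        rw [← Finset.mul_sum]
        gcongr
        exact sum_range_one_div_le_of_lacunary hm hpos hsum (hL m hm) n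
    _ ≤ 3 * A / (|t| * u m) := by
        rw [div_mul_div_comm]
        gcongr
        linarith

/-- Lemma (Móricz): if `(u_j)` (with `u_0 = 0`) satisfies the lacunary condition (L) with
constant `A > 1`, then for every `m ≥ 1` and `t ≠ 0`,
`Σ_{j≥m+1} max_{u_{j-1} ≤ v ≤ u_j} |∫_{u_{j-1}}^v sin(tu)/u du| ≤ 3A/(|t| u_m)`
(stated via all partial sums of the nonnegative tail series). -/
theorem stmt1 (u : ℕ → ℝ) (h0 : u 0 = 0) (hmono : StrictMono u)
    (hpos : ∀ j, 1 ≤ j → 0 < u j) (A : ℝ) (hA : 1 < A)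
    (hsum : Summable fun j : ℕ => 1 / u (j + 1))
    (hL : ∀ m : ℕ, 1 ≤ m → u m * ∑' j : ℕ, 1 / u (m + j) ≤ A)
    (t : ℝ) (ht : t ≠ 0) (m : ℕ) (hm : 1 ≤ m) :
    ∀ n : ℕ, ∑ j ∈ Finset.range n,
      sSup ((fun v : ℝ => |∫ s in (u (m + j))..v, Real.sin (t * s) / s|) ''
        Set.Icc (u (m + j)) (u (m + j + 1))) ≤ 3 * A / (|t| * u m) :=
  stmt1_general u hpos A hA hsum hL t ht m hm
end
end

section
/- Let f be Riemann integrable over the compact rectangle R = [a,b]×[c,d], let h(t₁,t₂) = ∬_{[a,t₁]×[c,t₂]} f(s₁,s₂) d(s₁,s₂), and let g be bounded and Riemann–Stieltjes integrable with respect to h over R. Then ∬_R g(t₁,t₂) dh(t₁,t₂) = ∬_R g(t₁,t₂) f(t₁,t₂) d(t₁,t₂). -/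
open Set Filter MeasureTheory Real
open scoped Topology ENNReal

noncomputable section

/-!
On a cell `[p, p'] × [q, q']`, the increment `Δh` is by inclusion–exclusion a limit of Riemann
sums of `f` over the cell, i.e. of averages of values of `f` on the cell times its area. So, up to
any `θ > 0`, `Δh` lies between `f P · area` and `f Q · area` for two points `P`, `Q` of the cell,
and `|g(ξ) (f(ξ) · area - Δh)| ≤ C (f P' - f Q') · area + C θ` for two points `P'`, `Q'` of the
cell. Summing over the cells bounds the difference of the two Riemann–Stieltjes sums by `C` times
the difference of two Riemann sums of `f`, both close to `h(b, d)`: these two choices of tags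
play the role of the upper and lower Darboux sums.
-/

lemma mem_Icc_of_forall_lt_succ {x : ℕ → ℝ} {n : ℕ} (hx : ∀ i < n, x i < x (i + 1)) {i j k : ℕ}
    (hij : i ≤ j) (hjk : j ≤ k) (hk : k ≤ n) : x j ∈ Icc (x i) (x k) :=
  have hmono := (strictMonoOn_Iic_of_lt_succ hx).monotoneOn
  ⟨hmono (mem_Iic.2 (by omega)) (mem_Iic.2 (by omega)) hij,
    hmono (mem_Iic.2 (by omega)) (mem_Iic.2 hk) hjk⟩

def IsFineGrid (γ : ℝ) (u : ℕ → ℝ) (k : ℕ) : Prop :=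
  ∀ i < k, u i < u (i + 1) ∧ u (i + 1) - u i < γ

namespace IsFineGrid

variable {γ : ℝ} {u : ℕ → ℝ} {k : ℕ}

lemma lt_succ (hu : IsFineGrid γ u k) : ∀ i < k, u i < u (i + 1) :=
  fun i hi => (hu i hi).1

lemma mono (hu : IsFineGrid γ u k) {γ' : ℝ} (hγ : γ ≤ γ') : IsFineGrid γ' u k :=
  fun i hi => ⟨(hu i hi).1, (hu i hi).2.trans_le hγ⟩

lemma of_le (hu : IsFineGrid γ u k) {K : ℕ} (hK : K ≤ k) : IsFineGrid γ u K :=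
  fun i hi => hu i (hi.trans_le hK)

lemma append {v : ℕ → ℝ} {l : ℕ} (hu : IsFineGrid γ u k) (hv : IsFineGrid γ v l)
    (huv : u k = v 0) : IsFineGrid γ (fun i => if i ≤ k then u i else v (i - k)) (k + l) := by
  intro i hi
  by_cases hik : i < k
  · simpa [hik.le, Nat.succ_le_of_lt hik] using hu i hik
  · have hvi : (if i ≤ k then u i else v (i - k)) = v (i - k) := by
      split_ifs with h
      · rw [show i = k by omega, huv, Nat.sub_self]
      · rfl
    simp only [hvi, show ¬ i + 1 ≤ k by omega, if_false, show i + 1 - k = i - k + 1 by omega]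
    exact hv (i - k) (by omega)

end IsFineGrid

lemma exists_isFineGrid {r s γ : ℝ} (hrs : r ≤ s) (hγ : 0 < γ) :
    ∃ k u, u 0 = r ∧ u k = s ∧ IsFineGrid γ u k := by
  rcases hrs.eq_or_lt with rfl | hrs
  · exact ⟨0, fun _ => r, rfl, rfl, fun i hi => absurd hi (Nat.not_lt_zero i)⟩
  set k := ⌈(s - r) / γ⌉₊ + 1
  have hk : (0 : ℝ) < k := by positivity
  have hstep : (s - r) / k < γ := by
    rw [div_lt_iff₀ hk, ← div_lt_iff₀' hγ]
    exact (Nat.le_ceil _).trans_lt (by simp [k])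
  refine ⟨k, fun i => r + i * ((s - r) / k), by simp, by field_simp; ring, fun i _ => ?_⟩
  push_cast
  constructor <;> nlinarith [div_pos (sub_pos.2 hrs) hk]

lemma exists_isFineGrid_through {a p p' γ : ℝ} (hap : a ≤ p) (hpp' : p ≤ p') (hγ : 0 < γ) :
    ∃ K N u, K ≤ N ∧ u 0 = a ∧ u K = p ∧ u N = p' ∧ IsFineGrid γ u N := by
  obtain ⟨K, u, hu0, huK, hu⟩ := exists_isFineGrid hap hγ
  obtain ⟨l, v, hv0, hvl, hv⟩ := exists_isFineGrid hpp' hγ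
  refine ⟨K, K + l, _, K.le_add_right l, by simp [hu0], by simp [huK],
    ?_, hu.append hv (huK.trans hv0.symm)⟩
  rcases l.eq_zero_or_pos with rfl | hl
  · simp [huK, ← hv0, hvl]
  · simp [show ¬ K + l ≤ K by omega, hvl]

def rectIncr {α : Type*} (F : α → α → ℝ) (p p' q q' : α) : ℝ :=
  F p' q' - F p q' - F p' q + F p q

lemma rectIncr_mul (p p' q q' : ℝ) : rectIncr (· * ·) p p' q q' = (p' - p) * (q' - q) := by
  unfold rectIncr; ring

lemma rectIncr_sum_range_sum_range (t : ℕ → ℕ → ℝ) {K N L M : ℕ} (hKN : K ≤ N) (hLM : L ≤ M) :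
    rectIncr (fun N M => ∑ i ∈ Finset.range N, ∑ j ∈ Finset.range M, t i j) K N L M =
      ∑ i ∈ Finset.Ico K N, ∑ j ∈ Finset.Ico L M, t i j := by
  simp only [rectIncr, ← Finset.sum_range_add_sum_Ico _ hKN, ← Finset.sum_range_add_sum_Ico _ hLM,
    Finset.sum_add_distrib]
  ring

lemma rsSum_eq (g F : ℝ → ℝ → ℝ) (x y : ℕ → ℝ) (ξ η : ℕ → ℕ → ℝ) (n m : ℕ) :
    RSSum g F x y ξ η n m = ∑ i ∈ Finset.range n, ∑ j ∈ Finset.range m,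
      g (ξ i j) (η i j) * rectIncr F (x i) (x (i + 1)) (y j) (y (j + 1)) := rfl

lemma RSIntegralOn.exists_abs_rsSum_nodes_sub_lt {g F : ℝ → ℝ → ℝ} {a b c d A : ℝ}
    (hI : RSIntegralOn g F a b c d A) {ε : ℝ} (hε : 0 < ε) :
    ∃ γ > 0, ∀ {K L : ℕ} {u v : ℕ → ℝ}, u 0 = a → u K = b → IsFineGrid γ u K →
      v 0 = c → v L = d → IsFineGrid γ v L →
      |RSSum g F u v (fun i _ => u i) (fun _ j => v j) K L - A| < ε := by
  obtain ⟨δ, hδ, hI⟩ := hI ε hε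
  refine ⟨δ / 2, by positivity, fun hu0 huK hu hv0 hvL hv => ?_⟩
  refine hI _ _ _ _ _ _ ⟨hu0, huK, hv0, hvL, hu.lt_succ, hv.lt_succ⟩
    (fun i hi j hj => ⟨⟨le_rfl, (hu i hi).1.le⟩, ⟨le_rfl, (hv j hj).1.le⟩⟩) fun i hi j hj => ?_
  obtain ⟨hui, hui'⟩ := hu i hi
  obtain ⟨hvj, hvj'⟩ := hv j hj
  rw [Real.sqrt_lt' hδ]
  nlinarith

lemma exists_mul_area_le_sum_nodes (F : ℝ → ℝ → ℝ) {u v : ℕ → ℝ} {K N L M : ℕ}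
    (hu : ∀ i < N, u i < u (i + 1)) (hv : ∀ j < M, v j < v (j + 1)) (hKN : K < N) (hLM : L < M) :
    ∃ P ∈ Icc (u K) (u N) ×ˢ Icc (v L) (v M),
      F P.1 P.2 * ((u N - u K) * (v M - v L)) ≤
        ∑ i ∈ Finset.Ico K N, ∑ j ∈ Finset.Ico L M,
          F (u i) (v j) * rectIncr (· * ·) (u i) (u (i + 1)) (v j) (v (j + 1)) := by
  have hne : (Finset.Ico K N ×ˢ Finset.Ico L M).Nonempty := ⟨(K, L), by simp [hKN, hLM]⟩
  obtain ⟨⟨i₀, j₀⟩, hij₀, hmin⟩ :=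
    (Finset.Ico K N ×ˢ Finset.Ico L M).exists_min_image (fun q => F (u q.1) (v q.2)) hne
  simp only [Finset.mem_product, Finset.mem_Ico] at hij₀
  refine ⟨(u i₀, v j₀), ⟨mem_Icc_of_forall_lt_succ hu hij₀.1.1 hij₀.1.2.le le_rfl,
    mem_Icc_of_forall_lt_succ hv hij₀.2.1 hij₀.2.2.le le_rfl⟩, ?_⟩
  calc F (u i₀) (v j₀) * ((u N - u K) * (v M - v L))
      = ∑ i ∈ Finset.Ico K N, ∑ j ∈ Finset.Ico L M,
          F (u i₀) (v j₀) * rectIncr (· * ·) (u i) (u (i + 1)) (v j) (v (j + 1)) := by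
        simp only [rectIncr_mul, ← Finset.mul_sum, ← Finset.sum_mul, Finset.sum_Ico_sub u hKN.le,
          ← Finset.mul_sum, Finset.sum_Ico_sub v hLM.le]
    _ ≤ _ := by
        refine Finset.sum_le_sum fun i hi => Finset.sum_le_sum fun j hj => ?_
        rw [Finset.mem_Ico] at hi hj
        rw [rectIncr_mul]
        exact mul_le_mul_of_nonneg_right (hmin (i, j) (by simp [hi, hj]))
          (mul_nonneg (sub_nonneg.2 (hu i (by omega)).le) (sub_nonneg.2 (hv j (by omega)).le))

lemma exists_mem_cell_bounds_rectIncr {a b c d : ℝ} {f h : ℝ → ℝ → ℝ}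
    (hf : ∀ t₁ ∈ Icc a b, ∀ t₂ ∈ Icc c d, RSIntegralOn f (· * ·) a t₁ c t₂ (h t₁ t₂))
    {p p' q q' : ℝ} (hap : a ≤ p) (hpp' : p < p') (hp'b : p' ≤ b)
    (hcq : c ≤ q) (hqq' : q < q') (hq'd : q' ≤ d) {θ : ℝ} (hθ : 0 < θ) :
    ∃ P ∈ Icc p p' ×ˢ Icc q q', ∃ Q ∈ Icc p p' ×ˢ Icc q q',
      f P.1 P.2 * ((p' - p) * (q' - q)) < rectIncr h p p' q q' + θ ∧
      rectIncr h p p' q q' < f Q.1 Q.2 * ((p' - p) * (q' - q)) + θ := by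
  have hp : p ∈ Icc a b := ⟨hap, hpp'.le.trans hp'b⟩
  have hp' : p' ∈ Icc a b := ⟨hap.trans hpp'.le, hp'b⟩
  have hq : q ∈ Icc c d := ⟨hcq, hqq'.le.trans hq'd⟩
  have hq' : q' ∈ Icc c d := ⟨hcq.trans hqq'.le, hq'd⟩
  have hθ4 : 0 < θ / 4 := by positivity
  obtain ⟨γ₁, hγ₁, H₁⟩ := (hf p' hp' q' hq').exists_abs_rsSum_nodes_sub_lt hθ4
  obtain ⟨γ₂, hγ₂, H₂⟩ := (hf p hp q' hq').exists_abs_rsSum_nodes_sub_lt hθ4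
  obtain ⟨γ₃, hγ₃, H₃⟩ := (hf p' hp' q hq).exists_abs_rsSum_nodes_sub_lt hθ4
  obtain ⟨γ₄, hγ₄, H₄⟩ := (hf p hp q hq).exists_abs_rsSum_nodes_sub_lt hθ4
  set γ := min (min γ₁ γ₂) (min γ₃ γ₄)
  have hγ : 0 < γ := lt_min (lt_min hγ₁ hγ₂) (lt_min hγ₃ hγ₄)
  obtain ⟨K, N, u, hKN, hu0, huK, huN, hu⟩ := exists_isFineGrid_through hap hpp'.le hγ
  obtain ⟨L, M, v, hLM, hv0, hvL, hvM, hv⟩ := exists_isFineGrid_through hcq hqq'.le hγ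
  have e₁ := H₁ hu0 huN (hu.mono (by simp [γ])) hv0 hvM (hv.mono (by simp [γ]))
  have e₂ := H₂ hu0 huK ((hu.of_le hKN).mono (by simp [γ])) hv0 hvM (hv.mono (by simp [γ]))
  have e₃ := H₃ hu0 huN (hu.mono (by simp [γ])) hv0 hvL ((hv.of_le hLM).mono (by simp [γ]))
  have e₄ := H₄ hu0 huK ((hu.of_le hKN).mono (by simp [γ])) hv0 hvL
    ((hv.of_le hLM).mono (by simp [γ]))
  simp only [rsSum_eq] at e₁ e₂ e₃ e₄
  have hsplit := rectIncr_sum_range_sum_range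
    (fun i j => f (u i) (v j) * rectIncr (· * ·) (u i) (u (i + 1)) (v j) (v (j + 1))) hKN hLM
  have hKN' : K < N := lt_of_le_of_ne hKN (by rintro rfl; linarith)
  have hLM' : L < M := lt_of_le_of_ne hLM (by rintro rfl; linarith)
  obtain ⟨P, hP, hPle⟩ := exists_mul_area_le_sum_nodes f hu.lt_succ hv.lt_succ hKN' hLM'
  obtain ⟨Q, hQ, hQle⟩ :=
    exists_mul_area_le_sum_nodes (fun s t => -f s t) hu.lt_succ hv.lt_succ hKN' hLM'
  simp only [neg_mul, Finset.sum_neg_distrib] at hQle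
  rw [huK, huN, hvL, hvM] at hP hPle hQ hQle
  refine ⟨P, hP, Q, hQ, ?_, ?_⟩ <;>
  · simp only [rectIncr] at hsplit e₁ e₂ e₃ e₄ hPle hQle ⊢
    linarith [abs_lt.1 e₁, abs_lt.1 e₂, abs_lt.1 e₃, abs_lt.1 e₄]

lemma exists_mem_cell_abs_sub_rectIncr_le {a b c d : ℝ} {f h : ℝ → ℝ → ℝ}
    (hf : ∀ t₁ ∈ Icc a b, ∀ t₂ ∈ Icc c d, RSIntegralOn f (· * ·) a t₁ c t₂ (h t₁ t₂))
    {p p' q q' : ℝ} (hap : a ≤ p) (hpp' : p < p') (hp'b : p' ≤ b)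
    (hcq : c ≤ q) (hqq' : q < q') (hq'd : q' ≤ d) {θ : ℝ} (hθ : 0 < θ)
    {T : ℝ × ℝ} (hT : T ∈ Icc p p' ×ˢ Icc q q') :
    ∃ P ∈ Icc p p' ×ˢ Icc q q', ∃ Q ∈ Icc p p' ×ˢ Icc q q',
      |f T.1 T.2 * rectIncr (· * ·) p p' q q' - rectIncr h p p' q q'| ≤
        (f P.1 P.2 - f Q.1 Q.2) * rectIncr (· * ·) p p' q q' + θ := by
  obtain ⟨P, hP, Q, hQ, hPlt, hltQ⟩ :=
    exists_mem_cell_bounds_rectIncr hf hap hpp' hp'b hcq hqq' hq'd hθ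
  rw [rectIncr_mul]
  rcases le_total (rectIncr h p p' q q') (f T.1 T.2 * ((p' - p) * (q' - q))) with hle | hle
  · refine ⟨T, hT, P, hP, ?_⟩
    rw [abs_of_nonneg (sub_nonneg.2 hle)]
    linarith
  · refine ⟨Q, hQ, T, hT, ?_⟩
    rw [abs_of_nonpos (sub_nonpos.2 hle)]
    linarith

lemma abs_rsSum_mul_sub_rsSum_le {f g h : ℝ → ℝ → ℝ} {C θ : ℝ} (hC : ∀ s t, |g s t| ≤ C)
    {x y : ℕ → ℝ} {ξ η : ℕ → ℕ → ℝ} {n m : ℕ} (P Q : ℕ → ℕ → ℝ × ℝ)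
    (hcell : ∀ i < n, ∀ j < m,
      |f (ξ i j) (η i j) * rectIncr (· * ·) (x i) (x (i + 1)) (y j) (y (j + 1)) -
          rectIncr h (x i) (x (i + 1)) (y j) (y (j + 1))| ≤
        (f (P i j).1 (P i j).2 - f (Q i j).1 (Q i j).2) *
          rectIncr (· * ·) (x i) (x (i + 1)) (y j) (y (j + 1)) + θ) :
    |RSSum (fun s t => g s t * f s t) (· * ·) x y ξ η n m - RSSum g h x y ξ η n m| ≤
      C * (RSSum f (· * ·) x y (fun i j => (P i j).1) (fun i j => (P i j).2) n m -
        RSSum f (· * ·) x y (fun i j => (Q i j).1) (fun i j => (Q i j).2) n m) +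
      n * m * C * θ := by
  have hC0 : 0 ≤ C := (abs_nonneg _).trans (hC 0 0)
  simp only [rsSum_eq, ← Finset.sum_sub_distrib]
  calc _ ≤ ∑ i ∈ Finset.range n, ∑ j ∈ Finset.range m,
        |g (ξ i j) (η i j) * (f (ξ i j) (η i j) *
          rectIncr (· * ·) (x i) (x (i + 1)) (y j) (y (j + 1)) -
            rectIncr h (x i) (x (i + 1)) (y j) (y (j + 1)))| := by
        refine (Finset.abs_sum_le_sum_abs _ _).trans (Finset.sum_le_sum fun i _ => ?_)
        refine (Finset.abs_sum_le_sum_abs _ _).trans_eq (Finset.sum_congr rfl fun j _ => ?_)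
        rw [mul_sub, mul_assoc]
    _ ≤ ∑ i ∈ Finset.range n, ∑ j ∈ Finset.range m,
        C * ((f (P i j).1 (P i j).2 - f (Q i j).1 (Q i j).2) *
          rectIncr (· * ·) (x i) (x (i + 1)) (y j) (y (j + 1)) + θ) := by
        refine Finset.sum_le_sum fun i hi => Finset.sum_le_sum fun j hj => ?_
        rw [abs_mul]
        exact mul_le_mul (hC _ _) (hcell i (Finset.mem_range.1 hi) j (Finset.mem_range.1 hj))
          (abs_nonneg _) hC0
    _ = _ := by
        simp only [mul_add, sub_mul, mul_sub, Finset.sum_add_distrib, Finset.sum_sub_distrib,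
          Finset.sum_const, Finset.card_range, nsmul_eq_mul, ← Finset.mul_sum]
        ring

lemma IsPartition.exists_cell_choice {a b c d θ : ℝ} {f h : ℝ → ℝ → ℝ}
    (hf : ∀ t₁ ∈ Icc a b, ∀ t₂ ∈ Icc c d, RSIntegralOn f (· * ·) a t₁ c t₂ (h t₁ t₂))
    {x y : ℕ → ℝ} {ξ η : ℕ → ℕ → ℝ} {n m : ℕ} (hP : IsPartition x y n m a b c d)
    (hT : Tags x y ξ η n m) (hθ : 0 < θ) :
    ∃ P Q : ℕ → ℕ → ℝ × ℝ,
      Tags x y (fun i j => (P i j).1) (fun i j => (P i j).2) n m ∧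
      Tags x y (fun i j => (Q i j).1) (fun i j => (Q i j).2) n m ∧
      ∀ i < n, ∀ j < m,
        |f (ξ i j) (η i j) * rectIncr (· * ·) (x i) (x (i + 1)) (y j) (y (j + 1)) -
            rectIncr h (x i) (x (i + 1)) (y j) (y (j + 1))| ≤
          (f (P i j).1 (P i j).2 - f (Q i j).1 (Q i j).2) *
            rectIncr (· * ·) (x i) (x (i + 1)) (y j) (y (j + 1)) + θ := by
  obtain ⟨rfl, rfl, rfl, rfl, hx, hy⟩ := hP
  have hcell : ∀ i j, ∃ PQ : (ℝ × ℝ) × (ℝ × ℝ), i < n → j < m →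
      PQ.1 ∈ Icc (x i) (x (i + 1)) ×ˢ Icc (y j) (y (j + 1)) ∧
      PQ.2 ∈ Icc (x i) (x (i + 1)) ×ˢ Icc (y j) (y (j + 1)) ∧
      |f (ξ i j) (η i j) * rectIncr (· * ·) (x i) (x (i + 1)) (y j) (y (j + 1)) -
          rectIncr h (x i) (x (i + 1)) (y j) (y (j + 1))| ≤
        (f PQ.1.1 PQ.1.2 - f PQ.2.1 PQ.2.2) *
          rectIncr (· * ·) (x i) (x (i + 1)) (y j) (y (j + 1)) + θ := by
    intro i j
    by_cases hij : i < n ∧ j < m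
    · obtain ⟨P, hP, Q, hQ, hPQ⟩ := exists_mem_cell_abs_sub_rectIncr_le hf
        (mem_Icc_of_forall_lt_succ hx (Nat.zero_le i) (i.le_succ) hij.1).1 (hx i hij.1)
        (mem_Icc_of_forall_lt_succ hx (Nat.zero_le _) hij.1 le_rfl).2
        (mem_Icc_of_forall_lt_succ hy (Nat.zero_le j) (j.le_succ) hij.2).1 (hy j hij.2)
        (mem_Icc_of_forall_lt_succ hy (Nat.zero_le _) hij.2 le_rfl).2 hθ (T := (ξ i j, η i j))
        (hT i hij.1 j hij.2)
      exact ⟨(P, Q), fun _ _ => ⟨hP, hQ, hPQ⟩⟩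
    · exact ⟨0, fun hi hj => absurd ⟨hi, hj⟩ hij⟩
  choose PQ hPQ using hcell
  exact ⟨fun i j => (PQ i j).1, fun i j => (PQ i j).2, fun i hi j hj => (hPQ i j hi hj).1,
    fun i hi j hj => (hPQ i j hi hj).2.1, fun i hi j hj => (hPQ i j hi hj).2.2⟩

lemma mul_div_le_of_le {x y e : ℝ} (hx : 0 ≤ x) (hxy : x ≤ y) (he : 0 ≤ e) : x * (e / y) ≤ e := by
  rw [mul_div_left_comm]
  exact mul_le_of_le_one_right he (div_le_one_of_le₀ hxy (hx.trans hxy))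

/-- Lemma: if `f` is Riemann integrable over `R = [a,b]×[c,d]`,
`h(t₁,t₂) = ∬_{[a,t₁]×[c,t₂]} f` (Riemann integral), and `g` is bounded and
Riemann–Stieltjes integrable with respect to `h` over `R`, then
`∬_R g dh = ∬_R g·f` (the latter a Riemann integral, i.e. a Riemann–Stieltjes integral
with respect to `(s,t) ↦ s·t`). -/
theorem stmt12 (a b c d : ℝ) (hab : a < b) (hcd : c < d)
    (f g h : ℝ → ℝ → ℝ)
    (hf : ∀ t₁ ∈ Set.Icc a b, ∀ t₂ ∈ Set.Icc c d,
      RSIntegralOn f (fun s t => s * t) a t₁ c t₂ (h t₁ t₂))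
    (hgb : ∃ C : ℝ, ∀ s t : ℝ, |g s t| ≤ C) :
    ∀ A : ℝ, RSIntegralOn g h a b c d A →
      RSIntegralOn (fun s t => g s t * f s t) (fun s t => s * t) a b c d A := by
  intro A hA ε hε
  obtain ⟨C, hC⟩ := hgb
  have hC0 : 0 ≤ C := (abs_nonneg _).trans (hC 0 0)
  obtain ⟨δ₁, hδ₁, H₁⟩ := hA (ε / 2) (by positivity)
  obtain ⟨δ₂, hδ₂, H₂⟩ := hf b ⟨hab.le, le_rfl⟩ d ⟨hcd.le, le_rfl⟩ (ε / 8 / (C + 1)) (by positivity)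
  refine ⟨min δ₁ δ₂, lt_min hδ₁ hδ₂, fun n m x y ξ η hP hT hmesh => ?_⟩
  obtain ⟨P, Q, hTP, hTQ, hcell⟩ :=
    hP.exists_cell_choice hf hT (θ := ε / 8 / ((C + 1) * (n * m + 1))) (by positivity)
  have e₁ := H₁ n m x y ξ η hP hT fun i hi j hj => (hmesh i hi j hj).trans_le (min_le_left _ _)
  have eP := H₂ n m x y _ _ hP hTP fun i hi j hj => (hmesh i hi j hj).trans_le (min_le_right _ _)
  have eQ := H₂ n m x y _ _ hP hTQ fun i hi j hj => (hmesh i hi j hj).trans_le (min_le_right _ _)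
  set SP := RSSum f (· * ·) x y (fun i j => (P i j).1) (fun i j => (P i j).2) n m
  set SQ := RSSum f (· * ·) x y (fun i j => (Q i j).1) (fun i j => (Q i j).2) n m
  have hosc : C * (SP - SQ) ≤ C * (2 * (ε / 8 / (C + 1))) :=
    mul_le_mul_of_nonneg_left (by linarith [abs_lt.1 eP, abs_lt.1 eQ]) hC0
  have hC₁ : C * (ε / 8 / (C + 1)) ≤ ε / 8 := mul_div_le_of_le hC0 (by linarith) (by positivity)
  have hC₂ : n * m * C * (ε / 8 / ((C + 1) * (n * m + 1))) ≤ ε / 8 :=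
    mul_div_le_of_le (by positivity)
      (by nlinarith [mul_nonneg n.cast_nonneg (m.cast_nonneg (α := ℝ))]) (by positivity)
  calc _ ≤ |RSSum (fun s t => g s t * f s t) (· * ·) x y ξ η n m - RSSum g h x y ξ η n m| +
        |RSSum g h x y ξ η n m - A| := abs_sub_le _ _ _
    _ < ε := by linarith [abs_rsSum_mul_sub_rsSum_le hC P Q hcell, abs_lt.1 e₁]
end
end
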